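/- arXiv:2502.18628 — 2 statements merged into one kernel-verified Lean document; each statement's English description precedes it below -/
import Mathlib

section
/- Let θ : [0,ℓ) → ℝ be measurable and suppose for every δ ∈ (0,1/2] the Lebesgue measure of {x : dist(θ(x) - π/2, πℤ) < δ} is at most C·δ for a constant C ≥ 1. Then ∫₀^ℓ log|cos θ(x)| dx ≥ -C' for a constant C' depending only on C and ℓ. -/
open Real MeasureTheory

lemma aux_cos_near_pi_half {y ε : ℝ} (h : |Real.cos y| < ε) :
    ∃ k : ℤ, |y - Real.pi / 2 - k * Real.pi| < Real.pi / 2 * ε := by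
  set s : ℝ := y - Real.pi / 2 with hs
  set k : ℤ := round (s / Real.pi) with hk
  set u : ℝ := s - k * Real.pi with hu
  have hπ : (0:ℝ) < Real.pi := Real.pi_pos
  have hu_le : |u| ≤ Real.pi / 2 := by
    have h1 : |s / Real.pi - k| ≤ 1 / 2 := abs_sub_round _
    have h2 : u = Real.pi * (s / Real.pi - k) := by
      field_simp [hu]
      ring
    rw [h2, abs_mul, abs_of_pos hπ]
    nlinarith [abs_nonneg (s / Real.pi - k)]
  have hcos : |Real.cos y| = |Real.sin u| := by
    have h1 : Real.cos y = -Real.sin s := by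
      have : y = s + Real.pi / 2 := by rw [hs]; ring
      rw [this, Real.cos_add_pi_div_two]
    have h2 : Real.sin s = (-1 : ℝ) ^ k * Real.sin u := by
      have : s = u + k * Real.pi := by rw [hu]; ring
      rw [this, Real.sin_add_int_mul_pi]
    have h3 : |(-1:ℝ) ^ k| = 1 := by
      rcases Int.even_or_odd k with he | ho
      · rw [he.neg_one_zpow, abs_one]
      · rw [ho.neg_one_zpow, abs_neg, abs_one]
    rw [h1, h2, abs_neg, abs_mul, h3, one_mul]
  have hjordan : 2 / Real.pi * |u| ≤ |Real.sin u| := Real.mul_abs_le_abs_sin hu_le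
  refine ⟨k, ?_⟩
  have : |u| < Real.pi / 2 * ε := by
    have h3 : 2 / Real.pi * |u| < ε := lt_of_le_of_lt (hjordan.trans_eq hcos.symm) h
    have h4 := mul_lt_mul_of_pos_left h3 (by positivity : (0:ℝ) < Real.pi / 2)
    calc |u| = Real.pi / 2 * (2 / Real.pi * |u|) := by field_simp
    _ < Real.pi / 2 * ε := h4
  simpa [hu, hs] using this

/-- If for every `δ ∈ (0,1/2]` the measure of
`{x ∈ [0,ℓ) : dist(θ(x) - π/2, πℤ) < δ}` is at most `C·δ` (`C ≥ 1`), then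
`∫₀^ℓ log|cos θ(x)| dx ≥ -C'` for a constant `C'` depending only on `C` and `ℓ`. -/
theorem log_cos_integral_lower_bound (C ℓ : ℝ) (hC : 1 ≤ C) (hℓ : 0 < ℓ) :
    ∃ C' : ℝ, ∀ θ : ℝ → ℝ, Measurable θ →
      (∀ δ : ℝ, δ ∈ Set.Ioc (0 : ℝ) (1 / 2) →
        volume {x ∈ Set.Ico 0 ℓ |
            ∃ k : ℤ, |θ x - Real.pi / 2 - k * Real.pi| < δ} ≤ ENNReal.ofReal (C * δ)) →
      -C' ≤ ∫ x in Set.Ico (0 : ℝ) ℓ, Real.log |Real.cos (θ x)| := by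
  refine ⟨3 * ℓ + 2 * C, ?_⟩
  intro θ hθ hmeas
  have hπ : (0:ℝ) < Real.pi := Real.pi_pos
  set f : ℝ → ℝ := fun x => -Real.log |Real.cos (θ x)| with hf
  have hf_nonneg : ∀ x, 0 ≤ f x := by
    intro x
    have h1 : Real.log |Real.cos (θ x)| ≤ 0 :=
      Real.log_nonpos (abs_nonneg _) (Real.abs_cos_le_one _)
    simpa [hf] using h1
  have hf_m : Measurable f :=
    (Real.measurable_log.comp ((measurable_abs.comp (Real.measurable_cos.comp hθ)))).neg
  set μ : Measure ℝ := volume.restrict (Set.Ico 0 ℓ) with hμ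
  -- Layer cake
  have hlc : ∫⁻ x, ENNReal.ofReal (f x) ∂μ = ∫⁻ t in Set.Ioi (0:ℝ), μ {a | t < f a} :=
    lintegral_eq_lintegral_meas_lt μ (Filter.Eventually.of_forall hf_nonneg) hf_m.aemeasurable
  -- bound the tail measures
  have hbound1 : ∀ t : ℝ, μ {a | t < f a} ≤ ENNReal.ofReal ℓ := by
    intro t
    calc μ {a | t < f a} ≤ μ Set.univ := measure_mono (Set.subset_univ _)
    _ = ENNReal.ofReal ℓ := by
        rw [hμ, Measure.restrict_apply_univ, Real.volume_Ico, sub_zero]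
  have hexp3 : Real.exp (-3) ≤ 1 / 4 := by
    have h4 : (4:ℝ) ≤ Real.exp 3 := by
      have := Real.add_one_le_exp (3:ℝ)
      linarith
    have hinv : Real.exp (-3) * Real.exp 3 = 1 := by
      rw [← Real.exp_add]; norm_num
    nlinarith [Real.exp_pos (-3:ℝ), Real.exp_pos (3:ℝ)]
  have hbound2 : ∀ t : ℝ, 3 < t →
      μ {a | t < f a} ≤ ENNReal.ofReal (C * (Real.pi / 2 * Real.exp (-t))) := by
    intro t ht
    set δ : ℝ := Real.pi / 2 * Real.exp (-t) with hδ
    have hδpos : 0 < δ := by positivity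
    have hδle : δ ≤ 1 / 2 := by
      have h1 : Real.exp (-t) ≤ Real.exp (-3) := Real.exp_le_exp.2 (by linarith)
      have h2 : Real.pi ≤ 4 := Real.pi_le_four
      nlinarith [Real.exp_pos (-t)]
    have hsub : {a | t < f a} ∩ Set.Ico 0 ℓ ⊆
        {x ∈ Set.Ico 0 ℓ | ∃ k : ℤ, |θ x - Real.pi / 2 - k * Real.pi| < δ} := by
      rintro x ⟨hx1, hx2⟩
      refine ⟨hx2, ?_⟩
      have hlog : Real.log |Real.cos (θ x)| < -t := by
        have : t < -Real.log |Real.cos (θ x)| := hx1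
        linarith
      have hcoslt : |Real.cos (θ x)| < Real.exp (-t) := by
        rcases eq_or_lt_of_le (abs_nonneg (Real.cos (θ x))) with h0 | h0
        · rw [← h0]; exact Real.exp_pos _
        · calc |Real.cos (θ x)| = Real.exp (Real.log |Real.cos (θ x)|) :=
                (Real.exp_log h0).symm
          _ < Real.exp (-t) := Real.exp_lt_exp.2 hlog
      exact aux_cos_near_pi_half hcoslt
    calc μ {a | t < f a} = volume ({a | t < f a} ∩ Set.Ico 0 ℓ) := by
          rw [hμ, Measure.restrict_apply (measurableSet_lt measurable_const hf_m)]
    _ ≤ volume {x ∈ Set.Ico 0 ℓ | ∃ k : ℤ, |θ x - Real.pi / 2 - k * Real.pi| < δ} :=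
          measure_mono hsub
    _ ≤ ENNReal.ofReal (C * δ) := hmeas δ ⟨hδpos, hδle⟩
  -- split the outer integral
  have hsplit : (Set.Ioi (0:ℝ)) = Set.Ioc 0 3 ∪ Set.Ioi 3 := by
    rw [Set.Ioc_union_Ioi_eq_Ioi (by norm_num)]
  have hL : ∫⁻ x, ENNReal.ofReal (f x) ∂μ ≤ ENNReal.ofReal (3 * ℓ + 2 * C) := by
    rw [hlc]
    have h1 : ∫⁻ t in Set.Ioc (0:ℝ) 3, μ {a | t < f a} ≤ ENNReal.ofReal (3 * ℓ) := by
      calc ∫⁻ t in Set.Ioc (0:ℝ) 3, μ {a | t < f a}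
          ≤ ∫⁻ _ in Set.Ioc (0:ℝ) 3, ENNReal.ofReal ℓ :=
            lintegral_mono fun t => hbound1 t
      _ = ENNReal.ofReal ℓ * volume (Set.Ioc (0:ℝ) 3) := by
            rw [setLIntegral_const]
      _ = ENNReal.ofReal ℓ * ENNReal.ofReal (3 - 0) := by rw [Real.volume_Ioc]
      _ = ENNReal.ofReal (ℓ * (3 - 0)) := (ENNReal.ofReal_mul hℓ.le).symm
      _ = ENNReal.ofReal (3 * ℓ) := by norm_num [mul_comm]
    have h2 : ∫⁻ t in Set.Ioi (3:ℝ), μ {a | t < f a} ≤ ENNReal.ofReal (C / 2) := by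
      have hint : IntegrableOn (fun t : ℝ => C * (Real.pi / 2 * Real.exp (-t)))
          (Set.Ioi (3:ℝ)) := by
        have h := (exp_neg_integrableOn_Ioi (3:ℝ) (by norm_num : (0:ℝ) < 1)).const_mul
          (C * (Real.pi / 2))
        simp [neg_mul, one_mul, mul_assoc] at h
        exact h
      calc ∫⁻ t in Set.Ioi (3:ℝ), μ {a | t < f a}
          ≤ ∫⁻ t in Set.Ioi (3:ℝ), ENNReal.ofReal (C * (Real.pi / 2 * Real.exp (-t))) := by
            refine setLIntegral_mono' measurableSet_Ioi fun t ht => hbound2 t ht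
      _ = ENNReal.ofReal (∫ t in Set.Ioi (3:ℝ), C * (Real.pi / 2 * Real.exp (-t))) := by
            rw [← ofReal_integral_eq_lintegral_ofReal hint]
            exact Filter.Eventually.of_forall fun t => by positivity
      _ ≤ ENNReal.ofReal (C / 2) := by
            apply ENNReal.ofReal_le_ofReal
            rw [integral_const_mul, integral_const_mul, integral_exp_neg_Ioi]
            have h2 : Real.pi ≤ 4 := Real.pi_le_four
            have hpe : Real.pi / 2 * Real.exp (-3) ≤ 1 / 2 := by
              nlinarith [Real.exp_pos (-3:ℝ),
                mul_nonneg (by linarith : (0:ℝ) ≤ 4 - Real.pi) (Real.exp_pos (-3:ℝ)).le]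
            have h3 := mul_le_mul_of_nonneg_left hpe (by linarith : (0:ℝ) ≤ C)
            linarith
    calc ∫⁻ t in Set.Ioi (0:ℝ), μ {a | t < f a}
        = (∫⁻ t in Set.Ioc (0:ℝ) 3, μ {a | t < f a})
          + ∫⁻ t in Set.Ioi (3:ℝ), μ {a | t < f a} := by
          rw [hsplit, lintegral_union measurableSet_Ioi]
          exact Set.Ioc_disjoint_Ioi le_rfl
    _ ≤ ENNReal.ofReal (3 * ℓ) + ENNReal.ofReal (C / 2) := add_le_add h1 h2
    _ ≤ ENNReal.ofReal (3 * ℓ + 2 * C) := by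
          rw [← ENNReal.ofReal_add (by positivity) (by positivity)]
          exact ENNReal.ofReal_le_ofReal (by linarith)
  -- conclude
  have hint_eq : ∫ x in Set.Ico (0:ℝ) ℓ, Real.log |Real.cos (θ x)| = -∫ x, f x ∂μ := by
    rw [hμ, ← integral_neg]
    refine integral_congr_ae (Filter.Eventually.of_forall fun x => ?_)
    simp [hf]
  rw [hint_eq]
  have hfi : ∫ x, f x ∂μ = (∫⁻ x, ENNReal.ofReal (f x) ∂μ).toReal :=
    integral_eq_lintegral_of_nonneg_ae (Filter.Eventually.of_forall hf_nonneg)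
      hf_m.aestronglyMeasurable
  have hle : ∫ x, f x ∂μ ≤ 3 * ℓ + 2 * C := by
    rw [hfi]
    calc (∫⁻ x, ENNReal.ofReal (f x) ∂μ).toReal
        ≤ (ENNReal.ofReal (3 * ℓ + 2 * C)).toReal :=
          ENNReal.toReal_mono ENNReal.ofReal_ne_top hL
    _ = 3 * ℓ + 2 * C := ENNReal.toReal_ofReal (by positivity)
  linarith
end

section
/- Let (A_n) be the cocycle products of A(ω) = Λ(Tω)·R_{θ(ω)}, where Λ(ω) = diag(λ√g(ω), (λ√g(ω))^{-1}) with g ≥ 1 and λ ≥ 1, and R_γ is rotation by γ. Define θ_n as the angle of the vector R_{θ(Tⁿω)}A_n(ω)e₁. Then ‖A_n(ω)e₁‖ ≥ λⁿ · ∏_{j=0}^{n-1} |cos θ_j(ω)|. -/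
open Real

/-- Rotation matrix by angle `γ`. -/
noncomputable def rot (γ : ℝ) : Matrix (Fin 2) (Fin 2) ℝ :=
  !![Real.cos γ, -Real.sin γ; Real.sin γ, Real.cos γ]

/-- Euclidean norm of a vector in `ℝ²` (as `Fin 2 → ℝ`). -/
noncomputable def norm2 (w : Fin 2 → ℝ) : ℝ := Real.sqrt (w 0 ^ 2 + w 1 ^ 2)

lemma norm2_rot (γ : ℝ) (w : Fin 2 → ℝ) : norm2 ((rot γ).mulVec w) = norm2 w := by
  simp [norm2, rot, Matrix.mulVec, dotProduct, Fin.sum_univ_two]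
  congr 1
  have := sin_sq_add_cos_sq γ
  ring_nf
  nlinarith [this]

/-- For the cocycle `A(ω) = Λ(Tω)·R_{θ(ω)}` with
`Λ(ω) = diag(λ√g(ω), (λ√g(ω))⁻¹)`, `g ≥ 1`, `λ ≥ 1`, writing `θ_n` for the angle of
the vector `R_{θ(Tⁿω)} A_n(ω) e₁`, one has
`‖A_n(ω)e₁‖ ≥ λⁿ · ∏_{j<n} |cos θ_j(ω)|`. -/
theorem cocycle_norm_lower_bound {X : Type*}
    (lam : ℝ) (hlam : 1 ≤ lam) (g θ : X → ℝ) (hg : ∀ ω, 1 ≤ g ω) (T : X → X)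
    (Lam : X → Matrix (Fin 2) (Fin 2) ℝ)
    (hLam : ∀ ω, Lam ω =
      !![lam * Real.sqrt (g ω), 0; 0, (lam * Real.sqrt (g ω))⁻¹])
    (A : X → Matrix (Fin 2) (Fin 2) ℝ) (hA : ∀ ω, A ω = Lam (T ω) * rot (θ ω))
    (An : ℕ → X → Matrix (Fin 2) (Fin 2) ℝ)
    (hAn0 : ∀ ω, An 0 ω = 1)
    (hAnS : ∀ n ω, An (n + 1) ω = A (T^[n] ω) * An n ω)
    (θn : ℕ → X → ℝ)
    (hθn : ∀ n ω,
      (rot (θ (T^[n] ω)) * An n ω).mulVec ![1, 0] =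
        norm2 ((rot (θ (T^[n] ω)) * An n ω).mulVec ![1, 0]) •
          ![Real.cos (θn n ω), Real.sin (θn n ω)]) :
    ∀ (n : ℕ) (ω : X),
      lam ^ n * ∏ j ∈ Finset.range n, |Real.cos (θn j ω)| ≤
        norm2 ((An n ω).mulVec ![1, 0]) := by
  intro n ω
  induction n with
  | zero =>
    simp [hAn0, norm2, Matrix.mulVec_one]
  | succ n ih =>
    -- setup
    set r := norm2 ((rot (θ (T^[n] ω)) * An n ω).mulVec ![1, 0]) with hr
    have hrA : r = norm2 ((An n ω).mulVec ![1, 0]) := by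
      rw [hr, ← Matrix.mulVec_mulVec, norm2_rot]
    have hr0 : 0 ≤ r := Real.sqrt_nonneg _
    -- the new vector
    have hstep : (An (n + 1) ω).mulVec ![1, 0] =
        (Lam (T^[n+1] ω)).mulVec
          ((rot (θ (T^[n] ω)) * An n ω).mulVec ![1, 0]) := by
      rw [hAnS, hA, Matrix.mul_assoc, ← Matrix.mulVec_mulVec,
        Function.iterate_succ_apply']
    set a := lam * Real.sqrt (g (T^[n+1] ω)) with ha
    have ha1 : 1 ≤ a := by
      have h1 : (1:ℝ) ≤ Real.sqrt (g (T^[n+1] ω)) := by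
        rw [show (1:ℝ) = Real.sqrt 1 by simp]
        exact Real.sqrt_le_sqrt (hg _)
      nlinarith
    have halam : lam ≤ a := by
      have h1 : (1:ℝ) ≤ Real.sqrt (g (T^[n+1] ω)) := by
        rw [show (1:ℝ) = Real.sqrt 1 by simp]
        exact Real.sqrt_le_sqrt (hg _)
      nlinarith
    -- compute norm of new vector
    have hkey : a * (r * |Real.cos (θn n ω)|) ≤ norm2 ((An (n + 1) ω).mulVec ![1, 0]) := by
      rw [hstep, hθn n ω, ← hr, hLam]
      have hcomp : (!![a, 0; 0, a⁻¹]).mulVec (r • ![Real.cos (θn n ω), Real.sin (θn n ω)]) =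
          ![a * (r * Real.cos (θn n ω)), a⁻¹ * (r * Real.sin (θn n ω))] := by
        funext i
        fin_cases i <;>
          simp [Matrix.mulVec, dotProduct, Fin.sum_univ_two]
      rw [← ha, hcomp]
      have : norm2 ![a * (r * Real.cos (θn n ω)), a⁻¹ * (r * Real.sin (θn n ω))] ≥
          Real.sqrt ((a * (r * Real.cos (θn n ω))) ^ 2) := by
        unfold norm2
        apply Real.sqrt_le_sqrt
        simp only [Matrix.cons_val_zero, Matrix.cons_val_one, Matrix.head_cons]
        nlinarith [sq_nonneg (a⁻¹ * (r * Real.sin (θn n ω)))]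
      have ha0 : (0:ℝ) ≤ a := le_trans zero_le_one ha1
      calc a * (r * |Real.cos (θn n ω)|) = |a * (r * Real.cos (θn n ω))| := by
            rw [abs_mul a, abs_mul r, abs_of_nonneg ha0, abs_of_nonneg hr0]
        _ = Real.sqrt ((a * (r * Real.cos (θn n ω))) ^ 2) := (Real.sqrt_sq_eq_abs _).symm
        _ ≤ _ := this
    -- chain
    rw [Finset.prod_range_succ, pow_succ]
    have hprod0 : 0 ≤ ∏ j ∈ Finset.range n, |Real.cos (θn j ω)| :=
      Finset.prod_nonneg fun j _ => abs_nonneg _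
    have hcos0 : 0 ≤ |Real.cos (θn n ω)| := abs_nonneg _
    have h1 : lam ^ n * ∏ j ∈ Finset.range n, |Real.cos (θn j ω)| ≤ r := by
      rw [hrA]; exact ih
    have hlampos : (0:ℝ) < lam := by linarith
    calc lam ^ n * lam * (( ∏ j ∈ Finset.range n, |Real.cos (θn j ω)|) * |Real.cos (θn n ω)|)
        = lam * ((lam ^ n * ∏ j ∈ Finset.range n, |Real.cos (θn j ω)|) * |Real.cos (θn n ω)|) := by
          ring
      _ ≤ lam * (r * |Real.cos (θn n ω)|) := by
          apply mul_le_mul_of_nonneg_left _ (le_of_lt hlampos)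
          exact mul_le_mul_of_nonneg_right h1 hcos0
      _ ≤ a * (r * |Real.cos (θn n ω)|) := by
          apply mul_le_mul_of_nonneg_right halam (mul_nonneg hr0 hcos0)
      _ ≤ _ := hkey
end
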